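/- arXiv:2106.15929 — 3 statements merged into one kernel-verified Lean document; each statement's English description precedes it below -/
import Mathlib

section
/- Let (C_ℓ)_{ℓ≥1} be a sequence of convex cones in ℝⁿ that is nested, i.e. C_ℓ ⊆ C_{ℓ+1} for all ℓ, and satisfies ⋃_{ℓ=1}^∞ C_ℓ = ℝⁿ. Then there exists an integer q such that C_q = ℝⁿ. -/
open Pointwise Set RealInnerProductSpace

namespace ConvexProcessPaper

/-- A convex cone: a nonempty convex set closed under nonnegative scalar multiplication. -/
def IsConvexCone {V : Type*} [AddCommMonoid V] [Module ℝ V] (S : Set V) : Prop :=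
  S.Nonempty ∧ Convex ℝ S ∧ ∀ c : ℝ, 0 ≤ c → ∀ x ∈ S, c • x ∈ S

/-- A set is a linear subspace. -/
def IsLinearSubspace {V : Type*} [AddCommGroup V] [Module ℝ V] (S : Set V) : Prop :=
  ∃ W : Submodule ℝ V, (W : Set V) = S

/-- Set-valued maps from ℝⁿ to ℝⁿ. -/
abbrev SVMap (n : ℕ) := EuclideanSpace ℝ (Fin n) → Set (EuclideanSpace ℝ (Fin n))

variable {n : ℕ}

/-- The graph of a set-valued map. -/
def graph (H : SVMap n) : Set (EuclideanSpace ℝ (Fin n) × EuclideanSpace ℝ (Fin n)) :=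
  {p | p.2 ∈ H p.1}

/-- A convex process: a set-valued map whose graph is a convex cone. -/
def IsConvexProcess (H : SVMap n) : Prop := IsConvexCone (graph H)

/-- The domain of a set-valued map. -/
def dom (H : SVMap n) : Set (EuclideanSpace ℝ (Fin n)) := {x | (H x).Nonempty}

/-- The image of a set-valued map. -/
def im (H : SVMap n) : Set (EuclideanSpace ℝ (Fin n)) := {y | ∃ x, y ∈ H x}

/-- The inverse of a set-valued map: gr(H⁻¹) = {(y,x) : (x,y) ∈ gr(H)}. -/
def invMap (H : SVMap n) : SVMap n := fun y => {x | y ∈ H x}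

/-- The image of a set under a set-valued map: H(S) = ⋃_{x ∈ S} H(x). -/
def imSet (H : SVMap n) (S : Set (EuclideanSpace ℝ (Fin n))) :
    Set (EuclideanSpace ℝ (Fin n)) := ⋃ x ∈ S, H x

/-- The reachable set: R(H) = ⋃_{ℓ ≥ 0} H^ℓ({0}). -/
def reach (H : SVMap n) : Set (EuclideanSpace ℝ (Fin n)) := ⋃ ℓ : ℕ, (imSet H)^[ℓ] {0}

/-- The null-controllable set: N(H) = R(H⁻¹). -/
def nullc (H : SVMap n) : Set (EuclideanSpace ℝ (Fin n)) := reach (invMap H)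

/-- The feasible set: states from which an infinite trajectory emanates. -/
def feas (H : SVMap n) : Set (EuclideanSpace ℝ (Fin n)) :=
  {ξ | ∃ x : ℕ → EuclideanSpace ℝ (Fin n), x 0 = ξ ∧ ∀ k, x (k + 1) ∈ H (x k)}

/-- The minimal linear process L₋: gr(L₋) = lin(gr(H)) = gr(H) ∩ (−gr(H)). -/
def Lminus (H : SVMap n) : SVMap n := fun x => {y | y ∈ H x ∧ -y ∈ H (-x)}

/-- The maximal linear process L₊: gr(L₊) = Lin(gr(H)) = gr(H) − gr(H). -/
def Lplus (H : SVMap n) : SVMap n :=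
  fun x => {y | ∃ x₁ y₁ x₂ y₂, y₁ ∈ H x₁ ∧ y₂ ∈ H x₂ ∧ x = x₁ - x₂ ∧ y = y₁ - y₂}

/-- The negative dual process: p ∈ H⁻(q) ⇔ ⟨p,x⟩ ≥ ⟨q,y⟩ for all (x,y) ∈ gr(H). -/
def negDual (H : SVMap n) : SVMap n :=
  fun q => {p | ∀ x y, y ∈ H x → ⟪q, y⟫ ≤ ⟪p, x⟫}

/-- The positive dual process: p ∈ H⁺(q) ⇔ ⟨p,x⟩ ≤ ⟨q,y⟩ for all (x,y) ∈ gr(H). -/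
def posDual (H : SVMap n) : SVMap n :=
  fun q => {p | ∀ x y, y ∈ H x → ⟪p, x⟫ ≤ ⟪q, y⟫}

/-- The negative polar cone of a set. -/
def negPolar (C : Set (EuclideanSpace ℝ (Fin n))) : Set (EuclideanSpace ℝ (Fin n)) :=
  {y | ∀ x ∈ C, ⟪x, y⟫ ≤ 0}

/-- The positive polar cone of a set. -/
def posPolar (C : Set (EuclideanSpace ℝ (Fin n))) : Set (EuclideanSpace ℝ (Fin n)) :=
  {y | ∀ x ∈ C, 0 ≤ ⟪x, y⟫}

/-- C is weakly H invariant: H(x) ∩ C ≠ ∅ for all x ∈ C. -/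
def WeaklyInv (H : SVMap n) (C : Set (EuclideanSpace ℝ (Fin n))) : Prop :=
  ∀ x ∈ C, (H x ∩ C).Nonempty

/-- C is strongly H invariant: H(x) ⊆ C for all x ∈ C. -/
def StronglyInv (H : SVMap n) (C : Set (EuclideanSpace ℝ (Fin n))) : Prop :=
  ∀ x ∈ C, H x ⊆ C

/-- H is reachable: every feasible state is reachable. -/
def IsReachable (H : SVMap n) : Prop := feas H ⊆ reach H

/-- H is null-controllable: every feasible state is null-controllable. -/
def IsNullControllable (H : SVMap n) : Prop := feas H ⊆ nullc H

/-!
Fix a basis `b` of `ℝⁿ`. The finitely many vectors `±bᵢ` all lie in a single `C q`, by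
directedness. The lineality space `C q ∩ -C q` of the cone `C q` is then a linear subspace
containing a basis, so it is everything.
-/

variable {V : Type*} [AddCommGroup V] [Module ℝ V] {S : Set V}

theorem IsConvexCone.add_mem (hS : IsConvexCone S) {x y : V} (hx : x ∈ S) (hy : y ∈ S) :
    x + y ∈ S := by
  have hmid : (1 / 2 : ℝ) • x + (1 / 2 : ℝ) • y ∈ S :=
    hS.2.1 hx hy (by norm_num) (by norm_num) (by norm_num)
  simpa [smul_add, smul_smul] using hS.2.2 2 zero_le_two _ hmid

def IsConvexCone.toPointedCone (hS : IsConvexCone S) : PointedCone ℝ V :=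
  .ofConeComb S hS.1 fun _ hx _ hy _ ha _ hb =>
    hS.add_mem (hS.2.2 _ ha _ hx) (hS.2.2 _ hb _ hy)

theorem IsConvexCone.eq_univ_of_span_eq_top (hS : IsConvexCone S) {s : Set V}
    (hs : Submodule.span ℝ s = ⊤) (hsS : s ⊆ S) (hnegS : -s ⊆ S) : S = univ := by
  have hlineal : s ⊆ hS.toPointedCone.lineal := fun x hx => ⟨hsS hx, hnegS (by simpa using hx)⟩
  have htop : hS.toPointedCone.lineal = ⊤ := top_unique (hs ▸ Submodule.span_le.2 hlineal)
  exact eq_univ_of_forall fun x => hS.toPointedCone.lineal_le (htop ▸ Submodule.mem_top)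

theorem IsConvexCone.exists_eq_univ_of_directed [FiniteDimensional ℝ V] {ι : Type*} [Nonempty ι]
    {C : ι → Set V} (hC : ∀ i, IsConvexCone (C i)) (hdir : Directed (· ⊆ ·) C)
    (hunion : ⋃ i, C i = univ) : ∃ i, C i = univ := by
  classical
  let b := Module.finBasis ℝ V
  obtain ⟨i, hi⟩ := hdir.exists_mem_subset_of_finset_subset_biUnion
    (s := Finset.univ.image b ∪ Finset.univ.image fun j => -b j) (hunion ▸ subset_univ _)
  refine ⟨i, (hC i).eq_univ_of_span_eq_top b.span_eq ?_ ?_⟩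
  · rintro _ ⟨j, rfl⟩
    exact hi (by simp)
  · intro x hx
    obtain ⟨j, hj⟩ := Set.mem_neg.1 hx
    rw [← neg_neg x, ← hj]
    exact hi (by simp)

/-- a nested sequence of convex cones covering ℝⁿ stabilizes at ℝⁿ. -/
theorem nested_cones_cover {n : ℕ} (C : ℕ → Set (EuclideanSpace ℝ (Fin n)))
    (hcone : ∀ ℓ, IsConvexCone (C ℓ))
    (hnested : ∀ ℓ, C ℓ ⊆ C (ℓ + 1))
    (hunion : ⋃ ℓ, C ℓ = Set.univ) :
    ∃ q, C q = Set.univ :=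
  IsConvexCone.exists_eq_univ_of_directed hcone (monotone_nat_of_le_succ hnested).directed_le hunion

end ConvexProcessPaper
end

section
/- Let H : ℝⁿ ⇉ ℝⁿ be a convex process and K ⊆ ℝⁿ a convex cone such that K − dom(H) is a linear subspace. If K is closed and the negative polar cone K⁻ is weakly H⁻ invariant, then K is strongly H invariant. -/
open Pointwise Set RealInnerProductSpace

namespace ConvexProcessPaper

variable {n : ℕ}

/-! For `x ∈ K`, `y ∈ H x` and `q ∈ K⁻`, weak invariance yields `p ∈ H⁻(q) ∩ K⁻`, so
`⟪q, y⟫ ≤ ⟪p, x⟫ ≤ 0`. Hence `H x` lies in the bipolar `K⁻⁻`, which is `K` itself because `K` is a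
closed convex cone. -/

theorem IsConvexCone.add_mem_s12 {V : Type*} [AddCommGroup V] [Module ℝ V] {K : Set V}
    (hK : IsConvexCone K) {a b : V} (ha : a ∈ K) (hb : b ∈ K) : a + b ∈ K := by
  have hmid : (1 / 2 : ℝ) • a + (1 / 2 : ℝ) • b ∈ K :=
    hK.2.1 ha hb (by norm_num) (by norm_num) (by norm_num)
  convert hK.2.2 2 (by norm_num) _ hmid using 1
  rw [smul_add, smul_smul, smul_smul]
  norm_num

def IsConvexCone.toProperCone {V : Type*} [AddCommGroup V] [Module ℝ V] [TopologicalSpace V]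
    {K : Set V} (hK : IsConvexCone K) (hclosed : IsClosed K) : ProperCone ℝ V where
  carrier := K
  add_mem' := hK.add_mem_s12
  zero_mem' := by
    obtain ⟨z, hz⟩ := hK.1
    simpa using hK.2.2 0 le_rfl z hz
  smul_mem' c x hx := hK.2.2 c c.2 x hx
  isClosed' := hclosed

theorem negPolar_negPolar (C : Set (EuclideanSpace ℝ (Fin n))) :
    negPolar (negPolar C) =
      ProperCone.innerDual (E := EuclideanSpace ℝ (Fin n)) (ProperCone.innerDual C) := by
  ext y
  simp only [negPolar, ProperCone.mem_innerDual, SetLike.mem_coe, mem_ofPred_eq]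
  constructor
  · intro hy q hq
    simpa [inner_neg_left] using hy (-q) fun x hx => by simpa [inner_neg_right] using hq hx
  · intro hy q hq
    simpa [inner_neg_left] using hy (x := -q) fun x hx => by simpa [inner_neg_right] using hq x hx

theorem IsConvexCone.negPolar_negPolar_eq {K : Set (EuclideanSpace ℝ (Fin n))}
    (hK : IsConvexCone K) (hclosed : IsClosed K) : negPolar (negPolar K) = K := by
  rw [negPolar_negPolar]
  exact congrArg SetLike.coe (ProperCone.innerDual_innerDual (hK.toProperCone hclosed))

theorem WeaklyInv.negDual_subset_negPolar_negPolar {H : SVMap n}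
    {K : Set (EuclideanSpace ℝ (Fin n))} (hweak : WeaklyInv (negDual H) (negPolar K))
    {x : EuclideanSpace ℝ (Fin n)} (hx : x ∈ K) : H x ⊆ negPolar (negPolar K) := by
  intro y hy q hq
  obtain ⟨p, hpq, hpK⟩ := hweak q hq
  calc ⟪q, y⟫ ≤ ⟪p, x⟫ := hpq x y hy
    _ = ⟪x, p⟫ := real_inner_comm x p
    _ ≤ 0 := hpK x hx

theorem weakInv_dual_to_strongInv_general {n : ℕ} (H : SVMap n)
    (K : Set (EuclideanSpace ℝ (Fin n))) (hK : IsConvexCone K)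
    (hclosed : IsClosed K)
    (hweak : WeaklyInv (negDual H) (negPolar K)) :
    StronglyInv H K := by
  intro x hx
  rw [← hK.negPolar_negPolar_eq hclosed]
  exact hweak.negDual_subset_negPolar_negPolar hx

/-- if K is closed and K⁻ is weakly H⁻ invariant then K is strongly H invariant. -/
theorem weakInv_dual_to_strongInv {n : ℕ} (H : SVMap n) (hH : IsConvexProcess H)
    (K : Set (EuclideanSpace ℝ (Fin n))) (hK : IsConvexCone K)
    (hsub : IsLinearSubspace (K - dom H))
    (hclosed : IsClosed K)
    (hweak : WeaklyInv (negDual H) (negPolar K)) :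
    StronglyInv H K :=
  weakInv_dual_to_strongInv_general H K hK hclosed hweak

end ConvexProcessPaper
end

section
/- Let H : ℝⁿ ⇉ ℝⁿ be a convex process. Then the reachable set R(H) is a strongly H invariant convex cone, and R(H) is contained in every strongly H invariant convex cone; that is, R(H) is the smallest strongly H invariant convex cone. -/
open Pointwise Set RealInnerProductSpace

namespace ConvexProcessPaper

variable {n : ℕ}

/-! The iterates `H^ℓ({0})` increase with `ℓ` because `0 ∈ H 0`, and each is a convex cone, being
the projection to the second factor of `gr(H) ∩ (H^(ℓ-1)({0}) × ℝⁿ)`. Hence their union `R(H)` is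
a convex cone; it is strongly invariant by construction, and a strongly invariant cone, which
contains `0`, contains every iterate by induction. -/

section ConvexCone

variable {V W : Type*} [AddCommMonoid V] [Module ℝ V] [AddCommMonoid W] [Module ℝ W]

theorem IsConvexCone.zero_mem {S : Set V} (hS : IsConvexCone S) : (0 : V) ∈ S := by
  obtain ⟨x, hx⟩ := hS.1
  simpa using hS.2.2 0 le_rfl x hx

theorem isConvexCone_zero : IsConvexCone ({0} : Set V) :=
  ⟨singleton_nonempty 0, convex_singleton 0, fun c _ x hx => by simp_all⟩

theorem isConvexCone_univ : IsConvexCone (univ : Set V) :=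
  ⟨univ_nonempty, convex_univ, fun _ _ _ _ => trivial⟩

theorem IsConvexCone.inter {S T : Set V} (hS : IsConvexCone S) (hT : IsConvexCone T) :
    IsConvexCone (S ∩ T) :=
  ⟨⟨0, hS.zero_mem, hT.zero_mem⟩, hS.2.1.inter hT.2.1,
    fun c hc x hx => ⟨hS.2.2 c hc x hx.1, hT.2.2 c hc x hx.2⟩⟩

theorem IsConvexCone.prod {S : Set V} {T : Set W} (hS : IsConvexCone S) (hT : IsConvexCone T) :
    IsConvexCone (S ×ˢ T) :=
  ⟨hS.1.prod hT.1, hS.2.1.prod hT.2.1,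
    fun c hc _ hx => ⟨hS.2.2 c hc _ hx.1, hT.2.2 c hc _ hx.2⟩⟩

theorem IsConvexCone.linear_image {S : Set V} (hS : IsConvexCone S) (f : V →ₗ[ℝ] W) :
    IsConvexCone (f '' S) := by
  refine ⟨hS.1.image f, hS.2.1.linear_image f, ?_⟩
  rintro c hc _ ⟨x, hx, rfl⟩
  exact ⟨c • x, hS.2.2 c hc x hx, f.map_smul c x⟩

theorem Directed.isConvexCone_iUnion {ι : Sort*} [Nonempty ι] {S : ι → Set V}
    (hdir : Directed (· ⊆ ·) S) (hS : ∀ i, IsConvexCone (S i)) : IsConvexCone (⋃ i, S i) := by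
  refine ⟨(hS (Classical.arbitrary ι)).1.mono (subset_iUnion S _),
    hdir.convex_iUnion fun i => (hS i).2.1, fun c hc x hx => ?_⟩
  obtain ⟨i, hi⟩ := mem_iUnion.1 hx
  exact mem_iUnion.2 ⟨i, (hS i).2.2 c hc x hi⟩

end ConvexCone

section ConvexProcess

variable {H : SVMap n}

theorem imSet_mono (H : SVMap n) : Monotone (imSet H) :=
  fun _ _ h => biUnion_subset_biUnion_left h

theorem imSet_eq_image_snd (H : SVMap n) (S : Set (EuclideanSpace ℝ (Fin n))) :
    imSet H S = LinearMap.snd ℝ _ _ '' (graph H ∩ S ×ˢ univ) := by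
  ext y
  simp [imSet, graph, and_comm]

theorem IsConvexProcess.zero_mem_apply_zero (hH : IsConvexProcess H) :
    (0 : EuclideanSpace ℝ (Fin n)) ∈ H 0 :=
  IsConvexCone.zero_mem (S := graph H) hH

theorem IsConvexProcess.isConvexCone_imSet (hH : IsConvexProcess H)
    {S : Set (EuclideanSpace ℝ (Fin n))} (hS : IsConvexCone S) : IsConvexCone (imSet H S) := by
  rw [imSet_eq_image_snd]
  exact (IsConvexCone.inter hH (hS.prod isConvexCone_univ)).linear_image _

theorem IsConvexProcess.isConvexCone_iterate_imSet (hH : IsConvexProcess H) (ℓ : ℕ) :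
    IsConvexCone ((imSet H)^[ℓ] {0}) := by
  induction ℓ with
  | zero => exact isConvexCone_zero
  | succ ℓ ih =>
    rw [Function.iterate_succ_apply']
    exact hH.isConvexCone_imSet ih

theorem IsConvexProcess.monotone_iterate_imSet (hH : IsConvexProcess H) :
    Monotone fun ℓ => (imSet H)^[ℓ] {0} :=
  (imSet_mono H).monotone_iterate_of_le_map
    (singleton_subset_iff.2 (mem_biUnion rfl hH.zero_mem_apply_zero))

theorem IsConvexProcess.isConvexCone_reach (hH : IsConvexProcess H) : IsConvexCone (reach H) :=
  Directed.isConvexCone_iUnion hH.monotone_iterate_imSet.directed_le hH.isConvexCone_iterate_imSet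

theorem stronglyInv_reach (H : SVMap n) : StronglyInv H (reach H) := by
  intro x hx y hy
  obtain ⟨ℓ, hℓ⟩ := mem_iUnion.1 hx
  refine mem_iUnion.2 ⟨ℓ + 1, ?_⟩
  rw [Function.iterate_succ_apply']
  exact mem_biUnion hℓ hy

theorem reach_subset_of_stronglyInv {C : Set (EuclideanSpace ℝ (Fin n))} (h0 : 0 ∈ C)
    (hC : StronglyInv H C) : reach H ⊆ C := by
  refine iUnion_subset fun ℓ => ?_
  induction ℓ with
  | zero => exact singleton_subset_iff.2 h0
  | succ ℓ ih =>
    rw [Function.iterate_succ_apply']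
    exact iUnion₂_subset fun x hx => hC x (ih hx)

end ConvexProcess

/-- R(H) is the smallest strongly H invariant convex cone. -/
theorem reach_smallest_stronglyInv {n : ℕ} (H : SVMap n) (hH : IsConvexProcess H) :
    IsConvexCone (reach H) ∧ StronglyInv H (reach H) ∧
      ∀ C : Set (EuclideanSpace ℝ (Fin n)), IsConvexCone C → StronglyInv H C → reach H ⊆ C :=
  ⟨hH.isConvexCone_reach, stronglyInv_reach H,
    fun _ hC hCinv => reach_subset_of_stronglyInv hC.zero_mem hCinv⟩

end ConvexProcessPaper
end
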